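/- arXiv:1912.04048 — 4 statements merged into one kernel-verified Lean document; each statement's English description precedes it below -/
import Mathlib

section
/- Let c be a real number, h > 0, and 0 < α < 1. Let f : ℝ → ℝ be differentiable with continuous derivative on [c, c+h], let D¹f denote the Caputo fractional derivative of order α of f with base point c, assume D¹f is differentiable with continuous derivative on [c, c+h], and let D²f denote the Caputo fractional derivative of order α of D¹f with base point c, assumed continuous on [c, c+h]. Then there exists η ∈ [c, c+h] such that f(c+h) = f(c) + (h^α/Γ(α+1)) · D¹f(c) + (h^(2α)/Γ(2α+1)) · D²f(η). -/
open intervalIntegral MeasureTheory Real Set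


lemma real_beta {a b : ℝ} (ha : 0 < a) (hb : 0 < b) :
    ∫ x in (0:ℝ)..1, x ^ (a - 1) * (1 - x) ^ (b - 1) =
      Real.Gamma a * Real.Gamma b / Real.Gamma (a + b) := by
  have key := Complex.Gamma_mul_Gamma_eq_betaIntegral (s := (a:ℂ)) (t := (b:ℂ))
    (by simpa using ha) (by simpa using hb)
  have hβ : Complex.betaIntegral (a:ℂ) (b:ℂ) =
      ((∫ x in (0:ℝ)..1, x ^ (a - 1) * (1 - x) ^ (b - 1) : ℝ) : ℂ) := by
    rw [Complex.betaIntegral, ← intervalIntegral.integral_ofReal]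
    refine intervalIntegral.integral_congr fun x hx => ?_
    rw [Set.uIcc_of_le (by norm_num)] at hx
    have h1 : ((x:ℂ)) ^ ((a:ℂ) - 1) = ((x ^ (a-1) : ℝ) : ℂ) := by
      rw [Complex.ofReal_cpow hx.1]; norm_cast
    have h2 : ((1:ℂ) - (x:ℂ)) ^ ((b:ℂ) - 1) = (((1 - x) ^ (b-1) : ℝ) : ℂ) := by
      rw [Complex.ofReal_cpow (by linarith [hx.2] : (0:ℝ) ≤ 1 - x)]; norm_cast
    rw [h1, h2]; norm_cast
  have hgpos : Real.Gamma (a + b) ≠ 0 := (Real.Gamma_pos_of_pos (by linarith)).ne'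
  have := key
  rw [hβ, ← Complex.ofReal_add, Complex.Gamma_ofReal, Complex.Gamma_ofReal,
    Complex.Gamma_ofReal, ← Complex.ofReal_mul, ← Complex.ofReal_mul] at this
  have h2 := Complex.ofReal_injective this
  field_simp
  linarith [h2]


lemma kernel_int {a b u t : ℝ} (ha : 0 < a) (hb : 0 < b) (hut : u < t) :
    ∫ s in u..t, (t - s) ^ (a - 1) * (s - u) ^ (b - 1) =
      (t - u) ^ (a + b - 1) * ∫ x in (0:ℝ)..1, x ^ (b - 1) * (1 - x) ^ (a - 1) := by
  have hc : t - u ≠ 0 := by linarith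
  have hcpos : (0:ℝ) < t - u := by linarith
  have key := intervalIntegral.integral_comp_add_mul
    (fun s => (t - s) ^ (a - 1) * (s - u) ^ (b - 1)) hc u (a := 0) (b := 1)
  simp only [mul_zero, add_zero] at key
  rw [show u + (t - u) * 1 = t by ring] at key
  have hL : (∫ x in (0:ℝ)..1, (t - (u + (t - u) * x)) ^ (a - 1) * (u + (t - u) * x - u) ^ (b - 1))
      = (t - u) ^ (a - 1) * (t - u) ^ (b - 1) *
        ∫ x in (0:ℝ)..1, x ^ (b - 1) * (1 - x) ^ (a - 1) := by
    rw [← intervalIntegral.integral_const_mul]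
    refine intervalIntegral.integral_congr fun x hx => ?_
    rw [Set.uIcc_of_le (by norm_num)] at hx
    have h1 : t - (u + (t - u) * x) = (t - u) * (1 - x) := by ring
    have h2 : u + (t - u) * x - u = (t - u) * x := by ring
    rw [h1, h2, Real.mul_rpow hcpos.le (by linarith [hx.2]),
      Real.mul_rpow hcpos.le hx.1]
    ring
  rw [hL] at key
  rw [smul_eq_mul] at key
  have hpow : (t - u) ^ (a + b - 1)
      = (t - u) ^ (a - 1) * (t - u) ^ (b - 1) * (t - u) ^ (1:ℝ) := by
    rw [← Real.rpow_add hcpos, ← Real.rpow_add hcpos]; ring_nf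
  rw [hpow, Real.rpow_one]
  field_simp at key
  linear_combination -key


lemma rpow_sub_intervalIntegrable {r : ℝ} (hr : -1 < r) (s x y : ℝ) :
    IntervalIntegrable (fun u => (s - u) ^ r) volume x y := by
  simpa using (intervalIntegral.intervalIntegrable_rpow' hr
    (a := s - x) (b := s - y)).comp_sub_left s

lemma semigroup_conv {a b c T : ℝ} (ha : 0 < a) (hb : 0 < b) (hcT : c < T)
    {g : ℝ → ℝ} (hg : Continuous g) :
    ∫ s in c..T, (T - s) ^ (a - 1) * ∫ u in c..s, (s - u) ^ (b - 1) * g u =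
      (Real.Gamma a * Real.Gamma b / Real.Gamma (a + b)) *
        ∫ u in c..T, (T - u) ^ (a + b - 1) * g u := by
  obtain ⟨M, hM⟩ := isCompact_Icc.exists_bound_of_continuousOn
    (s := Set.Icc c T) hg.continuousOn
  have hM0 : 0 ≤ M := le_trans (norm_nonneg _) (hM c ⟨le_refl c, hcT.le⟩)
  set μ := volume.restrict (Set.Ioc c T) with hμ
  set F : ℝ × ℝ → ℝ :=
    Set.indicator {p : ℝ × ℝ | p.2 ≤ p.1}
      (fun p => (T - p.1) ^ (a - 1) * ((p.1 - p.2) ^ (b - 1) * g p.2)) with hF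
  have hFm : Measurable F := by
    refine Measurable.indicator ?_ (measurableSet_le measurable_snd measurable_fst)
    fun_prop
  have hslice_fun : ∀ s : ℝ, (fun u => F (s, u)) =
      Set.indicator (Set.Iic s)
        (fun u => (T - s) ^ (a - 1) * ((s - u) ^ (b - 1) * g u)) := by
    intro s; funext u
    by_cases hus : u ≤ s <;> simp [hF, Set.indicator, hus]
  have hIic_int : ∀ s ∈ Set.Ioc c T, Set.Iic s ∩ Set.Ioc c T = Set.Ioc c s := by
    intro s hs; ext u
    constructor
    · rintro ⟨h1, h2, _⟩; exact ⟨h2, h1⟩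
    · rintro ⟨h1, h2⟩; exact ⟨h2, h1, le_trans h2 hs.2⟩
  have hslice_int : ∀ s ∈ Set.Ioc c T, Integrable (fun u => F (s, u)) μ := by
    intro s hs
    rw [hslice_fun s, hμ, integrable_indicator_iff measurableSet_Iic, IntegrableOn,
      Measure.restrict_restrict measurableSet_Iic, hIic_int s hs]
    exact (((rpow_sub_intervalIntegrable (by linarith) s c s).mul_continuousOn
      hg.continuousOn).const_mul _).1
  set φ : ℝ → ℝ := fun s => (T - s) ^ (a - 1) * (M * ((T - c) ^ b / b)) with hφ
  have hφint : Integrable φ μ := by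
    rw [hφ, hμ]
    exact ((rpow_sub_intervalIntegrable (by linarith) T c T).mul_const _).1
  have hnorm_bound : ∀ s ∈ Set.Ioc c T, (∫ u, ‖F (s, u)‖ ∂μ) ≤ φ s := by
    intro s hs
    have h0 : (fun u => ‖F (s, u)‖) = Set.indicator (Set.Iic s)
        (fun u => ‖(T - s) ^ (a - 1) * ((s - u) ^ (b - 1) * g u)‖) := by
      funext u
      rw [show ‖F (s, u)‖ = ‖(fun u => F (s, u)) u‖ from rfl, hslice_fun s]
      exact norm_indicator_eq_indicator_norm
        (f := fun u => (T - s) ^ (a - 1) * ((s - u) ^ (b - 1) * g u)) (a := u)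
    rw [h0, hμ, MeasureTheory.integral_indicator measurableSet_Iic,
      Measure.restrict_restrict measurableSet_Iic, hIic_int s hs]
    have int1 : IntegrableOn (fun u => ‖(T - s) ^ (a - 1) * ((s - u) ^ (b - 1) * g u)‖)
        (Set.Ioc c s) volume :=
      ((((rpow_sub_intervalIntegrable (by linarith) s c s).mul_continuousOn
        hg.continuousOn).const_mul _).norm).1
    have int2 : IntegrableOn (fun u => (T - s) ^ (a - 1) * ((s - u) ^ (b - 1) * M))
        (Set.Ioc c s) volume :=
      (((rpow_sub_intervalIntegrable (by linarith) s c s).mul_const _).const_mul _).1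
    have hTs : (0:ℝ) ≤ T - s := by linarith [hs.2]
    have step1 : (∫ u in Set.Ioc c s, ‖(T - s) ^ (a - 1) * ((s - u) ^ (b - 1) * g u)‖)
        ≤ ∫ u in Set.Ioc c s, (T - s) ^ (a - 1) * ((s - u) ^ (b - 1) * M) := by
      refine setIntegral_mono_on int1 int2 measurableSet_Ioc (fun u hu => ?_)
      have hsu : (0:ℝ) ≤ s - u := by linarith [hu.2]
      rw [norm_mul, norm_mul, Real.norm_rpow_of_nonneg hTs, Real.norm_rpow_of_nonneg hsu,
        Real.norm_eq_abs (s - u), Real.norm_eq_abs (T - s), abs_of_nonneg hTs, abs_of_nonneg hsu]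
      have hgu : ‖g u‖ ≤ M := hM u ⟨hu.1.le, le_trans hu.2 hs.2⟩
      have h1 : (0:ℝ) ≤ (T - s) ^ (a - 1) := Real.rpow_nonneg hTs _
      have h2 : (0:ℝ) ≤ (s - u) ^ (b - 1) := Real.rpow_nonneg hsu _
      exact mul_le_mul_of_nonneg_left
        (mul_le_mul_of_nonneg_left hgu h2) h1
    have step2 : (∫ u in Set.Ioc c s, (T - s) ^ (a - 1) * ((s - u) ^ (b - 1) * M))
        = (T - s) ^ (a - 1) * (M * ((s - c) ^ b / b)) := by
      rw [← intervalIntegral.integral_of_le hs.1.le, intervalIntegral.integral_const_mul]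
      congr 1
      rw [intervalIntegral.integral_mul_const,
        intervalIntegral.integral_comp_sub_left (fun x => x ^ (b - 1)) s, sub_self,
        integral_rpow (Or.inl (by linarith)), sub_add_cancel, Real.zero_rpow hb.ne',
        sub_zero]
      ring
    have step3 : (T - s) ^ (a - 1) * (M * ((s - c) ^ b / b)) ≤ φ s := by
      rw [hφ]
      have h1 : (0:ℝ) ≤ (T - s) ^ (a - 1) := Real.rpow_nonneg hTs _
      have h2 : (s - c) ^ b ≤ (T - c) ^ b :=
        Real.rpow_le_rpow (by linarith [hs.1]) (by linarith [hs.2]) hb.le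
      have h3 : M * ((s - c) ^ b / b) ≤ M * ((T - c) ^ b / b) := by
        gcongr
      exact mul_le_mul_of_nonneg_left h3 h1
    calc (∫ u in Set.Ioc c s, ‖(T - s) ^ (a - 1) * ((s - u) ^ (b - 1) * g u)‖)
        ≤ ∫ u in Set.Ioc c s, (T - s) ^ (a - 1) * ((s - u) ^ (b - 1) * M) := step1
      _ = (T - s) ^ (a - 1) * (M * ((s - c) ^ b / b)) := step2
      _ ≤ φ s := step3
  have hFae : AEStronglyMeasurable F (μ.prod μ) := hFm.aestronglyMeasurable
  have hInt : Integrable F (μ.prod μ) := by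
    rw [integrable_prod_iff hFae]
    constructor
    · exact (ae_restrict_mem measurableSet_Ioc).mono hslice_int
    · refine Integrable.mono' hφint hFae.norm.integral_prod_right' ?_
      refine (ae_restrict_mem measurableSet_Ioc).mono (fun s hs => ?_)
      rw [Real.norm_eq_abs, abs_of_nonneg (integral_nonneg fun u => norm_nonneg _)]
      exact hnorm_bound s hs
  have hswap : (∫ s, (∫ u, F (s, u) ∂μ) ∂μ) = ∫ u, (∫ s, F (s, u) ∂μ) ∂μ :=
    integral_integral_swap hInt
  have hL : (∫ s, (∫ u, F (s, u) ∂μ) ∂μ) =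
      ∫ s in c..T, (T - s) ^ (a - 1) * ∫ u in c..s, (s - u) ^ (b - 1) * g u := by
    rw [intervalIntegral.integral_of_le hcT.le, hμ]
    refine setIntegral_congr_fun measurableSet_Ioc (fun s hs => ?_)
    rw [hslice_fun s, MeasureTheory.integral_indicator measurableSet_Iic,
      Measure.restrict_restrict measurableSet_Iic, hIic_int s hs,
      ← intervalIntegral.integral_of_le hs.1.le,
      intervalIntegral.integral_const_mul]
  set βI : ℝ := ∫ x in (0:ℝ)..1, x ^ (b - 1) * (1 - x) ^ (a - 1) with hβI
  have hTnull : ∀ᵐ u : ℝ, u ≠ T := by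
    have h1 : (volume : Measure ℝ) {T} = 0 := measure_singleton T
    rw [ae_iff]
    simpa using h1
  have hR : (∫ u, (∫ s, F (s, u) ∂μ) ∂μ) =
      ∫ u in c..T, ((T - u) ^ (a + b - 1) * βI) * g u := by
    rw [intervalIntegral.integral_of_le hcT.le, hμ]
    refine setIntegral_congr_ae measurableSet_Ioc ?_
    filter_upwards [hTnull] with u huT hu
    have huT' : u < T := lt_of_le_of_ne hu.2 huT
    have hfun : (fun s => F (s, u)) = Set.indicator (Set.Ici u)
        (fun s => (T - s) ^ (a - 1) * ((s - u) ^ (b - 1) * g u)) := by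
      funext s
      by_cases hus : u ≤ s <;> simp [hF, Set.indicator, hus]
    have hIci : Set.Ici u ∩ Set.Ioc c T = Set.Icc u T := by
      ext s
      constructor
      · rintro ⟨h1, _, h3⟩; exact ⟨h1, h3⟩
      · rintro ⟨h1, h2⟩; exact ⟨h1, lt_of_lt_of_le hu.1 h1, h2⟩
    rw [hfun, MeasureTheory.integral_indicator measurableSet_Ici,
      Measure.restrict_restrict measurableSet_Ici, hIci,
      MeasureTheory.integral_Icc_eq_integral_Ioc,
      ← intervalIntegral.integral_of_le huT'.le]
    simp only [← mul_assoc]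
    rw [intervalIntegral.integral_mul_const, kernel_int ha hb huT']
  rw [hL] at hswap
  rw [hswap, hR]
  have hβval : βI = Real.Gamma b * Real.Gamma a / Real.Gamma (b + a) := real_beta hb ha
  rw [← intervalIntegral.integral_const_mul]
  rw [hβval]
  rw [show Real.Gamma b * Real.Gamma a / Real.Gamma (b + a)
      = Real.Gamma a * Real.Gamma b / Real.Gamma (a + b) by rw [add_comm b a]; ring]
  refine intervalIntegral.integral_congr (fun u hu => ?_)
  ring

lemma caputo_step {c T α : ℝ} (hα0 : 0 < α) (hα1 : α < 1) (hcT : c < T)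
    {F' G : ℝ → ℝ} (hF' : Continuous F')
    (hG : ∀ t ∈ Set.Icc c T, G t =
      (1 / Real.Gamma (1 - α)) * ∫ s in c..t, (t - s) ^ (-α) * F' s) :
    ∫ v in c..T, (T - v) ^ (α - 1) * G v = Real.Gamma α * ∫ u in c..T, F' u := by
  have hΓ : Real.Gamma (1 - α) ≠ 0 := (Real.Gamma_pos_of_pos (by linarith)).ne'
  have key := semigroup_conv (a := α) (b := 1 - α) hα0 (by linarith) hcT hF'
  simp only [show α + (1 - α) - 1 = (0:ℝ) by ring, Real.rpow_zero, one_mul,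
    show (1 : ℝ) - α - 1 = -α by ring] at key
  rw [show α + (1 - α) = (1:ℝ) by ring, Real.Gamma_one] at key
  have hL : (∫ s in c..T, (T - s) ^ (α - 1) * ∫ u in c..s, (s - u) ^ (-α) * F' u)
      = Real.Gamma (1 - α) * ∫ v in c..T, (T - v) ^ (α - 1) * G v := by
    rw [← intervalIntegral.integral_const_mul]
    refine intervalIntegral.integral_congr (fun s hs => ?_)
    rw [Set.uIcc_of_le hcT.le] at hs
    rw [hG s hs]
    field_simp
  rw [hL] at key
  rw [div_one] at key
  have : Real.Gamma (1 - α) * ∫ v in c..T, (T - v) ^ (α - 1) * G v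
      = Real.Gamma (1 - α) * (Real.Gamma α * ∫ u in c..T, F' u) := by
    rw [key]; ring
  exact mul_left_cancel₀ hΓ this

lemma exists_cont_ext {c T : ℝ} (hle : c ≤ T) {φ : ℝ → ℝ}
    (hφ : ContinuousOn φ (Set.Icc c T)) :
    ∃ ψ : ℝ → ℝ, Continuous ψ ∧ Set.EqOn ψ φ (Set.Icc c T) := by
  refine ⟨fun x => φ (Set.projIcc c T hle x), ?_, fun x hx => by
    simp [Set.projIcc_of_mem hle hx]⟩
  exact (continuousOn_iff_continuous_restrict.mp hφ).comp continuous_projIcc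

/-- Second-order fractional Taylor expansion with mean-value remainder (crisp form
of the expansion used in Section 5 of the paper to derive the generalized Euler
method): `f(c+h) = f(c) + (h^α/Γ(α+1))·ᶜD^α f(c) + (h^(2α)/Γ(2α+1))·ᶜD^(2α) f(η)`
for some `η ∈ [c, c+h]`. -/
theorem fractional_taylor_second_order_mean_value
    (c h α : ℝ) (hh : 0 < h) (hα0 : 0 < α) (hα1 : α < 1)
    (f f' D1 D1' D2 : ℝ → ℝ)
    (hfderiv : ∀ t ∈ Set.Icc c (c + h), HasDerivAt f (f' t) t)
    (hf'cont : ContinuousOn f' (Set.Icc c (c + h)))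
    (hD1 : ∀ t ∈ Set.Icc c (c + h),
      D1 t = (1 / Real.Gamma (1 - α)) * ∫ s in c..t, (t - s) ^ (-α) * f' s)
    (hD1deriv : ∀ t ∈ Set.Icc c (c + h), HasDerivAt D1 (D1' t) t)
    (hD1'cont : ContinuousOn D1' (Set.Icc c (c + h)))
    (hD2 : ∀ t ∈ Set.Icc c (c + h),
      D2 t = (1 / Real.Gamma (1 - α)) * ∫ s in c..t, (t - s) ^ (-α) * D1' s)
    (hD2cont : ContinuousOn D2 (Set.Icc c (c + h))) :
    ∃ η ∈ Set.Icc c (c + h),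
      f (c + h) = f c + h ^ α / Real.Gamma (α + 1) * D1 c
        + h ^ (2 * α) / Real.Gamma (2 * α + 1) * D2 η := by
  have hle : c ≤ c + h := by linarith
  have hcT : c < c + h := by linarith
  have hΓα : (0:ℝ) < Real.Gamma α := Real.Gamma_pos_of_pos hα0
  have hΓ2α : (0:ℝ) < Real.Gamma (2*α) := Real.Gamma_pos_of_pos (by linarith)
  obtain ⟨fe, hfe, hfeq⟩ := exists_cont_ext hle hf'cont
  obtain ⟨De, hDe, hDeq⟩ := exists_cont_ext hle hD1'cont
  obtain ⟨Ee, hEe, hEeq⟩ := exists_cont_ext hle hD2cont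
  have hD1c : D1 c = 0 := by
    rw [hD1 c ⟨le_refl c, hle⟩, intervalIntegral.integral_same, mul_zero]
  have hsub : ∀ s ∈ Set.Icc c (c+h), Set.uIcc c s ⊆ Set.Icc c (c+h) := by
    intro s hs
    rw [Set.uIcc_of_le hs.1]
    exact Set.Icc_subset_Icc le_rfl hs.2
  have hGf : ∀ t ∈ Set.Icc c (c+h), D1 t =
      (1 / Real.Gamma (1 - α)) * ∫ s in c..t, (t - s) ^ (-α) * fe s := by
    intro t ht
    rw [hD1 t ht]
    congr 1
    exact intervalIntegral.integral_congr (fun s hs => by rw [hfeq (hsub t ht hs)])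
  have hGD : ∀ t ∈ Set.Icc c (c+h), D2 t =
      (1 / Real.Gamma (1 - α)) * ∫ s in c..t, (t - s) ^ (-α) * De s := by
    intro t ht
    rw [hD2 t ht]
    congr 1
    exact intervalIntegral.integral_congr (fun s hs => by rw [hDeq (hsub t ht hs)])
  have hFTCf : (∫ u in c..(c+h), fe u) = f (c+h) - f c := by
    rw [intervalIntegral.integral_congr (g := f')
      (fun u hu => hfeq (hsub (c+h) ⟨hle, le_rfl⟩ hu))]
    exact intervalIntegral.integral_eq_sub_of_hasDerivAt
      (fun t ht => hfderiv t (by rwa [Set.uIcc_of_le hle] at ht))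
      ((hf'cont.mono (by rw [Set.uIcc_of_le hle])).intervalIntegrable)
  have hFTCD1 : ∀ s ∈ Set.Icc c (c+h), (∫ u in c..s, De u) = D1 s := by
    intro s hs
    have h1 : (∫ u in c..s, De u) = ∫ u in c..s, D1' u :=
      intervalIntegral.integral_congr (fun u hu => hDeq (hsub s hs hu))
    have h2 : (∫ u in c..s, D1' u) = D1 s - D1 c :=
      intervalIntegral.integral_eq_sub_of_hasDerivAt
        (fun t ht => hD1deriv t (hsub s hs ht))
        ((hD1'cont.mono (hsub s hs)).intervalIntegrable)
    rw [h1, h2, hD1c, sub_zero]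
  have H1 : (∫ v in c..(c+h), ((c+h) - v) ^ (α - 1) * D1 v)
      = Real.Gamma α * (f (c+h) - f c) := by
    rw [caputo_step hα0 hα1 hcT hfe hGf, hFTCf]
  have H2 : ∀ s ∈ Set.Icc c (c+h),
      (∫ u in c..s, (s - u) ^ (α - 1) * D2 u) = Real.Gamma α * D1 s := by
    intro s hs
    rcases eq_or_lt_of_le hs.1 with hcs | hcs
    · rw [← hcs, intervalIntegral.integral_same, hD1c, mul_zero]
    · rw [caputo_step hα0 hα1 hcs hDe
        (fun t ht => hGD t ⟨ht.1, le_trans ht.2 hs.2⟩), hFTCD1 s hs]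
  have key := semigroup_conv (a := α) (b := α) hα0 hα0 hcT hEe
  have hinner : Set.EqOn
      (fun s => ((c+h) - s) ^ (α-1) * ∫ u in c..s, (s - u) ^ (α - 1) * Ee u)
      (fun s => Real.Gamma α * (((c+h) - s) ^ (α-1) * D1 s))
      (Set.uIcc c (c+h)) := by
    intro s hs
    rw [Set.uIcc_of_le hle] at hs
    have : (∫ u in c..s, (s - u) ^ (α - 1) * Ee u)
        = ∫ u in c..s, (s - u) ^ (α - 1) * D2 u :=
      intervalIntegral.integral_congr (fun u hu => by rw [hEeq (hsub s hs hu)])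
    simp only
    rw [this, H2 s hs]
    ring
  rw [intervalIntegral.integral_congr hinner, intervalIntegral.integral_const_mul, H1] at key
  have hI : (∫ u in c..(c+h), ((c+h) - u) ^ (2*α - 1) * Ee u)
      = Real.Gamma (2*α) * (f (c+h) - f c) := by
    simp only [show α + α - 1 = 2*α - 1 by ring, show α + α = 2*α by ring] at key
    rw [div_mul_eq_mul_div, mul_comm, eq_div_iff hΓ2α.ne'] at key
    apply mul_left_cancel₀ (mul_ne_zero hΓα.ne' hΓα.ne')
    linear_combination -key
  have hW : (∫ u in c..(c+h), ((c+h) - u) ^ (2*α - 1)) = h ^ (2*α) / (2*α) := by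
    rw [intervalIntegral.integral_comp_sub_left (fun x => x ^ (2*α-1)) (c+h)]
    rw [sub_self, show c + h - c = h by ring,
      integral_rpow (Or.inl (by linarith : (-1:ℝ) < 2*α-1)),
      show 2*α - 1 + 1 = 2*α by ring, Real.zero_rpow (by positivity : (2*α:ℝ) ≠ 0), sub_zero]
  have hw_int : IntervalIntegrable (fun u => ((c+h) - u) ^ (2*α-1)) volume c (c+h) :=
    rpow_sub_intervalIntegrable (by linarith) _ _ _
  have hwE_int : IntervalIntegrable (fun u => ((c+h) - u) ^ (2*α-1) * Ee u) volume c (c+h) :=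
    hw_int.mul_continuousOn hEe.continuousOn
  obtain ⟨p, hp, hpmin⟩ := isCompact_Icc.exists_isMinOn (s := Set.Icc c (c+h))
    ⟨c, ⟨le_refl c, hle⟩⟩ hEe.continuousOn
  obtain ⟨q, hq, hqmax⟩ := isCompact_Icc.exists_isMaxOn (s := Set.Icc c (c+h))
    ⟨c, ⟨le_refl c, hle⟩⟩ hEe.continuousOn
  have hWpos : (0:ℝ) < h^(2*α)/(2*α) := by positivity
  have hlow : Ee p * (h^(2*α)/(2*α)) ≤ ∫ u in c..(c+h), ((c+h) - u) ^ (2*α-1) * Ee u := by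
    rw [← hW, ← intervalIntegral.integral_const_mul]
    refine intervalIntegral.integral_mono_on hle (hw_int.const_mul _) hwE_int (fun u hu => ?_)
    have hnn : (0:ℝ) ≤ ((c+h) - u)^(2*α-1) := Real.rpow_nonneg (by linarith [hu.2]) _
    rw [mul_comm]
    exact mul_le_mul_of_nonneg_left (hpmin hu) hnn
  have hhigh : (∫ u in c..(c+h), ((c+h) - u) ^ (2*α-1) * Ee u) ≤ Ee q * (h^(2*α)/(2*α)) := by
    rw [← hW, ← intervalIntegral.integral_const_mul]
    refine intervalIntegral.integral_mono_on hle hwE_int (hw_int.const_mul _) (fun u hu => ?_)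
    have hnn : (0:ℝ) ≤ ((c+h) - u)^(2*α-1) := Real.rpow_nonneg (by linarith [hu.2]) _
    rw [mul_comm (Ee q)]
    exact mul_le_mul_of_nonneg_left (hqmax hu) hnn
  set I : ℝ := ∫ u in c..(c+h), ((c+h) - u) ^ (2*α-1) * Ee u with hIdef
  have hmem : I / (h^(2*α)/(2*α)) ∈ Set.uIcc (Ee p) (Ee q) := by
    rw [Set.mem_uIcc]
    left
    constructor
    · rw [le_div_iff₀ hWpos]; exact hlow
    · rw [div_le_iff₀ hWpos]; exact hhigh
  obtain ⟨η, hη, hηval⟩ := intermediate_value_uIcc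
    (hEe.continuousOn : ContinuousOn Ee (Set.uIcc p q)) hmem
  have hηIcc : η ∈ Set.Icc c (c+h) := by
    rw [Set.mem_uIcc] at hη
    constructor
    · rcases hη with ⟨h1, _⟩ | ⟨h1, _⟩
      · linarith [hp.1]
      · linarith [hq.1]
    · rcases hη with ⟨_, h2⟩ | ⟨_, h2⟩
      · linarith [hq.2]
      · linarith [hp.2]
  refine ⟨η, hηIcc, ?_⟩
  have hval : I = D2 η * (h^(2*α)/(2*α)) := by
    rw [← hEeq hηIcc, hηval]
    field_simp
  have hfinal : Real.Gamma (2*α) * (f (c+h) - f c) = D2 η * (h^(2*α)/(2*α)) := by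
    rw [← hval, ← hI]
  have hΓ2α1 : Real.Gamma (2*α+1) = 2*α * Real.Gamma (2*α) := Real.Gamma_add_one (by positivity)
  rw [hD1c, mul_zero, add_zero, hΓ2α1]
  have h2α : (0:ℝ) < 2*α := by linarith
  field_simp at hfinal ⊢
  linear_combination hfinal
end

section
/- Let a < b be real numbers, let 0 < α ≤ 1, and let g : [a,b] → ℝ be continuous. Then for every t ∈ [a,b] there exists η ∈ [a,t] such that (1/Γ(α)) ∫_a^t (t−s)^(α−1) [ (1/Γ(α)) ∫_a^s (s−u)^(α−1) g(u) du ] ds = g(η) · (t−a)^(2α)/Γ(2α+1). -/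
/-!
If `m ≤ g ≤ M` on `[a, t]`, then since the kernel `(t - s) ^ (α - 1)` is nonnegative the inner
integral lies between `m (s - a) ^ α / Γ(α + 1)` and `M (s - a) ^ α / Γ(α + 1)`. Integrating once
more and evaluating the Beta integral `I^α_a (s - a) ^ α = Γ(α + 1) / Γ(2α + 1) (t - a) ^ (2α)`
traps the double integral between `m K` and `M K` with `K = (t - a) ^ (2α) / Γ(2α + 1)`.
Taking `m`, `M` to be the extreme values of `g`, the intermediate value theorem produces `η`.
-/

open Real Set MeasureTheory

theorem ContinuousOn.exists_continuous_eqOn_Icc {α β : Type*} [LinearOrder α] [TopologicalSpace α]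
    [OrderTopology α] [TopologicalSpace β] {a b : α} (hab : a ≤ b) {g : α → β}
    (hg : ContinuousOn g (Icc a b)) : ∃ g' : α → β, Continuous g' ∧ EqOn g' g (Icc a b) :=
  ⟨IccExtend hab ((Icc a b).domRestrict g), continuous_IccExtend_iff.2 hg.domRestrict,
    fun _ hx => IccExtend_of_mem hab _ hx⟩

theorem IsCompact.exists_eq_mul_of_forall_mem_Icc {X : Type*} [TopologicalSpace X] {s : Set X}
    {g : X → ℝ} (hs : IsCompact s) (hs' : IsPreconnected s) (hne : s.Nonempty)
    (hg : ContinuousOn g s) {V K : ℝ} (hK : 0 ≤ K)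
    (hV : ∀ m M, (∀ x ∈ s, g x ∈ Icc m M) → V ∈ Icc (m * K) (M * K)) :
    ∃ η ∈ s, V = g η * K := by
  obtain ⟨x, hx, hmin⟩ := hs.exists_isMinOn hne hg
  obtain ⟨y, hy, hmax⟩ := hs.exists_isMaxOn hne hg
  obtain ⟨hVx, hVy⟩ := hV (g x) (g y) fun z hz => ⟨hmin hz, hmax hz⟩
  rcases hK.eq_or_lt with rfl | hK
  · exact ⟨x, hx, by simp only [mul_zero] at hVx hVy ⊢; exact hVy.antisymm hVx⟩
  · obtain ⟨η, hη, hgη⟩ :=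
      hs'.intermediate_value hx hy hg ⟨(le_div_iff₀ hK).2 hVx, (div_le_iff₀ hK).2 hVy⟩
    exact ⟨η, hη, by rw [hgη, div_mul_cancel₀ _ hK.ne']⟩

theorem intervalIntegrable_of_le_of_le {μ : Measure ℝ} {f g₁ g₂ : ℝ → ℝ} {a b : ℝ} (hab : a ≤ b)
    (hf : AEStronglyMeasurable f (μ.restrict (Ioc a b)))
    (h₁ : IntervalIntegrable g₁ μ a b) (h₂ : IntervalIntegrable g₂ μ a b)
    (hle : ∀ x ∈ Ioc a b, g₁ x ≤ f x ∧ f x ≤ g₂ x) : IntervalIntegrable f μ a b := by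
  rw [intervalIntegrable_iff_integrableOn_Ioc_of_le hab] at h₁ h₂ ⊢
  exact integrable_of_le_of_le hf
    (ae_restrict_of_forall_mem measurableSet_Ioc fun x hx => (hle x hx).1)
    (ae_restrict_of_forall_mem measurableSet_Ioc fun x hx => (hle x hx).2) h₁ h₂

theorem measurable_intervalIntegral_prod_right {f : ℝ × ℝ → ℝ} (hf : Measurable f) (a : ℝ) :
    Measurable fun t => ∫ s in a..t, f (t, s) := by
  have hind : ∀ S : Set (ℝ × ℝ), MeasurableSet S → Measurable fun t => ∫ s, S.indicator f (t, s) :=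
    fun S hS => (hf.indicator hS).stronglyMeasurable.integral_prod_right'.measurable
  have hS₁ : MeasurableSet {p : ℝ × ℝ | a < p.2 ∧ p.2 ≤ p.1} :=
    (measurableSet_lt measurable_const measurable_snd).inter
      (measurableSet_le measurable_snd measurable_fst)
  have hS₂ : MeasurableSet {p : ℝ × ℝ | p.1 < p.2 ∧ p.2 ≤ a} :=
    (measurableSet_lt measurable_fst measurable_snd).inter
      (measurableSet_le measurable_snd measurable_const)
  convert (hind _ hS₁).sub (hind _ hS₂) using 2 with t
  rw [intervalIntegral, Pi.sub_apply, ← integral_indicator measurableSet_Ioc,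
    ← integral_indicator measurableSet_Ioc]
  rfl

theorem integral_rpow_mul_one_sub_rpow {p q : ℝ} (hp : 0 < p) (hq : 0 < q) :
    ∫ x in (0 : ℝ)..1, x ^ (p - 1) * (1 - x) ^ (q - 1) = Gamma p * Gamma q / Gamma (p + q) := by
  have h : ((∫ x in (0 : ℝ)..1, x ^ (p - 1) * (1 - x) ^ (q - 1) : ℝ) : ℂ)
      = Complex.betaIntegral p q := by
    rw [Complex.betaIntegral, ← intervalIntegral.integral_ofReal]
    refine intervalIntegral.integral_congr fun x hx => ?_
    rw [uIcc_of_le zero_le_one] at hx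
    push_cast [Complex.ofReal_cpow hx.1, Complex.ofReal_cpow (sub_nonneg.2 hx.2)]
    rfl
  rw [Complex.betaIntegral_eq_Gamma_mul_div _ _ (by simpa) (by simpa), ← Complex.ofReal_add,
    Complex.Gamma_ofReal, Complex.Gamma_ofReal, Complex.Gamma_ofReal] at h
  exact_mod_cast h

theorem integral_sub_rpow_mul_sub_rpow {p q a t : ℝ} (hp : 0 < p) (hq : 0 < q) (hat : a < t) :
    ∫ s in a..t, (t - s) ^ (p - 1) * (s - a) ^ (q - 1)
      = Gamma p * Gamma q / Gamma (p + q) * (t - a) ^ (p + q - 1) := by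
  have hc : 0 < t - a := sub_pos.2 hat
  have hsubst := intervalIntegral.mul_integral_comp_mul_add (a := 0) (b := 1)
    (f := fun s => (t - s) ^ (p - 1) * (s - a) ^ (q - 1)) (t - a) a
  rw [mul_zero, zero_add, mul_one, sub_add_cancel] at hsubst
  have hintegrand :
      EqOn (fun x => (t - ((t - a) * x + a)) ^ (p - 1) * ((t - a) * x + a - a) ^ (q - 1))
      (fun x => (t - a) ^ (p + q - 2) * (x ^ (q - 1) * (1 - x) ^ (p - 1))) (uIcc 0 1) := by
    intro x hx
    rw [uIcc_of_le zero_le_one] at hx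
    simp only
    rw [show t - ((t - a) * x + a) = (t - a) * (1 - x) by ring, add_sub_cancel_right,
      mul_rpow hc.le (sub_nonneg.2 hx.2), mul_rpow hc.le hx.1,
      show p + q - 2 = (p - 1) + (q - 1) by ring, rpow_add hc]
    ring
  rw [← hsubst, intervalIntegral.integral_congr hintegrand, intervalIntegral.integral_const_mul,
    integral_rpow_mul_one_sub_rpow hq hp, add_comm q p,
    show p + q - 1 = 1 + (p + q - 2) by ring, rpow_add hc, rpow_one]
  ring

noncomputable def riemannLiouvilleIntegral (α a : ℝ) (f : ℝ → ℝ) (t : ℝ) : ℝ :=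
  1 / Gamma α * ∫ s in a..t, (t - s) ^ (α - 1) * f s

section RiemannLiouville

variable {α a t m M : ℝ} {f g : ℝ → ℝ}

theorem riemannLiouvilleIntegral_congr (h : EqOn f g (uIcc a t)) :
    riemannLiouvilleIntegral α a f t = riemannLiouvilleIntegral α a g t := by
  rw [riemannLiouvilleIntegral, riemannLiouvilleIntegral]
  congr 1
  exact intervalIntegral.integral_congr fun s hs => by simp only [h hs]

theorem riemannLiouvilleIntegral_const_mul (c : ℝ) :
    riemannLiouvilleIntegral α a (fun s => c * f s) t = c * riemannLiouvilleIntegral α a f t := by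
  simp only [riemannLiouvilleIntegral, mul_left_comm _ c, intervalIntegral.integral_const_mul]

theorem riemannLiouvilleIntegral_sub_rpow (hα : 0 < α) {β : ℝ} (hβ : 0 ≤ β) (hat : a ≤ t) :
    riemannLiouvilleIntegral α a (fun s => (s - a) ^ β) t
      = Gamma (β + 1) / Gamma (α + β + 1) * (t - a) ^ (α + β) := by
  rcases hat.eq_or_lt with rfl | hat
  · simp [riemannLiouvilleIntegral, zero_rpow (by linarith : α + β ≠ 0)]
  · have h := integral_sub_rpow_mul_sub_rpow hα (by linarith : 0 < β + 1) hat
    rw [add_sub_cancel_right, ← add_assoc, add_sub_cancel_right] at h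
    rw [riemannLiouvilleIntegral, h]
    field_simp [(Gamma_pos_of_pos hα).ne']

theorem riemannLiouvilleIntegral_const (hα : 0 < α) (hat : a ≤ t) (c : ℝ) :
    riemannLiouvilleIntegral α a (fun _ => c) t = c / Gamma (α + 1) * (t - a) ^ α := by
  have h := riemannLiouvilleIntegral_sub_rpow hα (β := 0) le_rfl hat
  simp only [rpow_zero, zero_add, add_zero, Gamma_one] at h
  rw [← mul_one c, riemannLiouvilleIntegral_const_mul, h]
  ring

theorem intervalIntegrable_sub_rpow_mul (hα : 0 < α) (hf : ContinuousOn f (uIcc a t)) :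
    IntervalIntegrable (fun s => (t - s) ^ (α - 1) * f s) volume a t := by
  have hkernel : IntervalIntegrable (fun s => (t - s) ^ (α - 1)) volume a t := by
    simpa using (intervalIntegral.intervalIntegrable_rpow' (a := t - a) (b := t - t)
      (by linarith : -1 < α - 1)).comp_sub_left t
  exact hkernel.mul_continuousOn hf

theorem riemannLiouvilleIntegral_mono (hα : 0 < α) (hat : a ≤ t)
    (hf : IntervalIntegrable (fun s => (t - s) ^ (α - 1) * f s) volume a t)
    (hg : IntervalIntegrable (fun s => (t - s) ^ (α - 1) * g s) volume a t)
    (hfg : ∀ s ∈ Icc a t, f s ≤ g s) :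
    riemannLiouvilleIntegral α a f t ≤ riemannLiouvilleIntegral α a g t :=
  mul_le_mul_of_nonneg_left
    (intervalIntegral.integral_mono_on hat hf hg fun s hs =>
      mul_le_mul_of_nonneg_left (hfg s hs) (rpow_nonneg (sub_nonneg.2 hs.2) _))
    (one_div_nonneg.2 (Gamma_pos_of_pos hα).le)

theorem measurable_riemannLiouvilleIntegral (hg : Measurable g) :
    Measurable (riemannLiouvilleIntegral α a g) :=
  (measurable_intervalIntegral_prod_right
    (f := fun p : ℝ × ℝ => (p.1 - p.2) ^ (α - 1) * g p.2) (by fun_prop) a).const_mul _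

theorem riemannLiouvilleIntegral_mem_Icc (hα : 0 < α) (hat : a ≤ t) (hf : ContinuousOn f (Icc a t))
    (hfmM : ∀ s ∈ Icc a t, f s ∈ Icc m M) :
    riemannLiouvilleIntegral α a f t
      ∈ Icc (m / Gamma (α + 1) * (t - a) ^ α) (M / Gamma (α + 1) * (t - a) ^ α) := by
  have hf_int := intervalIntegrable_sub_rpow_mul hα (uIcc_of_le hat ▸ hf)
  have hconst_int : ∀ c : ℝ, IntervalIntegrable (fun s => (t - s) ^ (α - 1) * c) volume a t :=
    fun _ => intervalIntegrable_sub_rpow_mul hα continuousOn_const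
  rw [← riemannLiouvilleIntegral_const hα hat, ← riemannLiouvilleIntegral_const hα hat]
  exact ⟨riemannLiouvilleIntegral_mono hα hat (hconst_int m) hf_int fun s hs => (hfmM s hs).1,
    riemannLiouvilleIntegral_mono hα hat hf_int (hconst_int M) fun s hs => (hfmM s hs).2⟩

theorem riemannLiouvilleIntegral_riemannLiouvilleIntegral_mem_Icc (hα : 0 < α) (hg : Continuous g)
    (hat : a ≤ t) (hgmM : ∀ s ∈ Icc a t, g s ∈ Icc m M) :
    riemannLiouvilleIntegral α a (riemannLiouvilleIntegral α a g) t
      ∈ Icc (m * ((t - a) ^ (2 * α) / Gamma (2 * α + 1)))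
        (M * ((t - a) ^ (2 * α) / Gamma (2 * α + 1))) := by
  set bound : ℝ → ℝ → ℝ := fun c s => c / Gamma (α + 1) * (s - a) ^ α
  have hbound_int : ∀ c, IntervalIntegrable (fun s => (t - s) ^ (α - 1) * bound c s) volume a t :=
    fun c => intervalIntegrable_sub_rpow_mul hα (continuous_const.mul
      ((continuous_id.sub continuous_const).rpow_const fun _ => Or.inr hα.le)).continuousOn
  have hbound_value : ∀ c, riemannLiouvilleIntegral α a (bound c) t
      = c * ((t - a) ^ (2 * α) / Gamma (2 * α + 1)) := by
    intro c
    rw [riemannLiouvilleIntegral_const_mul, riemannLiouvilleIntegral_sub_rpow hα hα.le hat,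
      Gamma_add_one hα.ne', ← two_mul]
    field_simp [(Gamma_pos_of_pos hα).ne']
  have hinner : ∀ s ∈ Icc a t, riemannLiouvilleIntegral α a g s ∈ Icc (bound m s) (bound M s) :=
    fun s hs => riemannLiouvilleIntegral_mem_Icc hα hs.1 hg.continuousOn
      fun u hu => hgmM u ⟨hu.1, hu.2.trans hs.2⟩
  have hkernel_mul : ∀ s ∈ Ioc a t, ∀ {x y : ℝ}, x ≤ y →
      (t - s) ^ (α - 1) * x ≤ (t - s) ^ (α - 1) * y :=
    fun s hs _ _ hxy => mul_le_mul_of_nonneg_left hxy (rpow_nonneg (sub_nonneg.2 hs.2) _)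
  have hinner_int : IntervalIntegrable
      (fun s => (t - s) ^ (α - 1) * riemannLiouvilleIntegral α a g s) volume a t :=
    intervalIntegrable_of_le_of_le hat
      (((measurable_const.sub measurable_id).pow_const _).mul
        (measurable_riemannLiouvilleIntegral hg.measurable)).aestronglyMeasurable
      (hbound_int m) (hbound_int M) fun s hs =>
        ⟨hkernel_mul s hs (hinner s (Ioc_subset_Icc_self hs)).1,
          hkernel_mul s hs (hinner s (Ioc_subset_Icc_self hs)).2⟩
  rw [← hbound_value, ← hbound_value]
  exact ⟨riemannLiouvilleIntegral_mono hα hat (hbound_int m) hinner_int fun s hs => (hinner s hs).1,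
    riemannLiouvilleIntegral_mono hα hat hinner_int (hbound_int M) fun s hs => (hinner s hs).2⟩

end RiemannLiouville

theorem double_rl_integral_mean_value_general
    (a b α : ℝ) (hα0 : 0 < α)
    (g : ℝ → ℝ) (hg : ContinuousOn g (Set.Icc a b)) :
    ∀ t ∈ Set.Icc a b, ∃ η ∈ Set.Icc a t,
      (1 / Real.Gamma α) * ∫ s in a..t, (t - s) ^ (α - 1) *
        ((1 / Real.Gamma α) * ∫ u in a..s, (s - u) ^ (α - 1) * g u)
      = g η * (t - a) ^ (2 * α) / Real.Gamma (2 * α + 1) := by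
  rintro t ⟨hat, htb⟩
  -- A globally continuous replacement of `g` makes the inner integral measurable in `s`.
  obtain ⟨g', hg', hg'g⟩ := hg.exists_continuous_eqOn_Icc (hat.trans htb)
  have hg'g_t : EqOn g' g (Icc a t) := hg'g.mono (Icc_subset_Icc_right htb)
  have hreplace : riemannLiouvilleIntegral α a (riemannLiouvilleIntegral α a g) t
      = riemannLiouvilleIntegral α a (riemannLiouvilleIntegral α a g') t := by
    refine riemannLiouvilleIntegral_congr fun s hs => riemannLiouvilleIntegral_congr ?_
    rw [uIcc_of_le hat] at hs
    rw [uIcc_of_le hs.1]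
    exact hg'g_t.symm.mono (Icc_subset_Icc_right hs.2)
  obtain ⟨η, hη, hmean⟩ := isCompact_Icc.exists_eq_mul_of_forall_mem_Icc isPreconnected_Icc
    (nonempty_Icc.2 hat) hg'.continuousOn (by positivity) fun m M hmM =>
      riemannLiouvilleIntegral_riemannLiouvilleIntegral_mem_Icc hα0 hg' hat hmM
  refine ⟨η, hη, ?_⟩
  change riemannLiouvilleIntegral α a (riemannLiouvilleIntegral α a g) t = _
  rw [hreplace, hmean, hg'g_t hη, mul_div_assoc]

/-- Mean-value representation of the double Riemann–Liouville fractional integral: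
for continuous `g` on `[a,b]` and `0 < α ≤ 1`, for each `t ∈ [a,b]` there is
`η ∈ [a,t]` with `I^α_a(I^α_a g)(t) = g(η)·(t−a)^(2α)/Γ(2α+1)`. -/
theorem double_rl_integral_mean_value
    (a b α : ℝ) (hab : a < b) (hα0 : 0 < α) (hα1 : α ≤ 1)
    (g : ℝ → ℝ) (hg : ContinuousOn g (Set.Icc a b)) :
    ∀ t ∈ Set.Icc a b, ∃ η ∈ Set.Icc a t,
      (1 / Real.Gamma α) * ∫ s in a..t, (t - s) ^ (α - 1) *
        ((1 / Real.Gamma α) * ∫ u in a..s, (s - u) ^ (α - 1) * g u)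
      = g η * (t - a) ^ (2 * α) / Real.Gamma (2 * α + 1) :=
  double_rl_integral_mean_value_general a b α hα0 g hg
end

section
/- Let T > 0, 0 < α ≤ 1, h > 0, ℓ > 0, M ≥ 0, and let f : ℝ × ℝ → ℝ satisfy |f(t,x) − f(t,y)| ≤ ℓ·|x−y| for all t, x, y. Let t_k = k·h, and let (y_k) and (Y_k) be real sequences with Y₀ = y₀, y_{k+1} = y_k + (h^α/Γ(α+1))·f(t_k, y_k), and Y_{k+1} = Y_k + (h^α/Γ(α+1))·f(t_k, Y_k) + r_k, where |r_k| ≤ (h^(2α)/Γ(2α+1))·M for all k. Then for every k with (k+1)·h^α ≤ T, |Y_{k+1} − y_{k+1}| ≤ (h^α·Γ(α+1)/(ℓ·Γ(2α+1)))·(exp(ℓ·T/Γ(α+1)) − 1)·M. In particular, the error bound tends to 0 as h → 0⁺, so the method is convergent. -/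
open Filter Topology

/-- Global truncation error bound and convergence of the generalized Euler
method (Section 6.2, step I, crisp form): if `f` is `ℓ`-Lipschitz in its second
argument, `y` is the Euler sequence and `Y` the perturbed (exact-solution)
sequence with residuals `|r_k| ≤ (h^(2α)/Γ(2α+1))·M`, then
`|Y_{k+1} − y_{k+1}| ≤ (h^α·Γ(α+1)/(ℓ·Γ(2α+1)))·(exp(ℓ·T/Γ(α+1)) − 1)·M`
for grid points with `(k+1)·h^α ≤ T`, and this bound tends to `0` as `h → 0⁺`. -/
theorem generalized_euler_convergent
    (T α h ℓ M : ℝ) (hT : 0 < T) (hα0 : 0 < α) (hα1 : α ≤ 1)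
    (hh : 0 < h) (hℓ : 0 < ℓ) (hM : 0 ≤ M)
    (f : ℝ × ℝ → ℝ)
    (hLip : ∀ t x y : ℝ, |f (t, x) - f (t, y)| ≤ ℓ * |x - y|)
    (y Y : ℕ → ℝ) (r : ℕ → ℝ)
    (hY0 : Y 0 = y 0)
    (hy : ∀ k : ℕ, y (k + 1) = y k + h ^ α / Real.Gamma (α + 1) * f ((k : ℝ) * h, y k))
    (hYrec : ∀ k : ℕ,
      Y (k + 1) = Y k + h ^ α / Real.Gamma (α + 1) * f ((k : ℝ) * h, Y k) + r k)
    (hr : ∀ k : ℕ, |r k| ≤ h ^ (2 * α) / Real.Gamma (2 * α + 1) * M) :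
    (∀ k : ℕ, ((k : ℝ) + 1) * h ^ α ≤ T →
      |Y (k + 1) - y (k + 1)| ≤
        h ^ α * Real.Gamma (α + 1) / (ℓ * Real.Gamma (2 * α + 1)) *
          (Real.exp (ℓ * T / Real.Gamma (α + 1)) - 1) * M) ∧
    Tendsto (fun h' : ℝ =>
        h' ^ α * Real.Gamma (α + 1) / (ℓ * Real.Gamma (2 * α + 1)) *
          (Real.exp (ℓ * T / Real.Gamma (α + 1)) - 1) * M)
      (𝓝[>] 0) (𝓝 0) := by
  have hΓ1 : 0 < Real.Gamma (α + 1) := Real.Gamma_pos_of_pos (by linarith)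
  have hΓ2 : 0 < Real.Gamma (2 * α + 1) := Real.Gamma_pos_of_pos (by linarith)
  have hhα : 0 < h ^ α := Real.rpow_pos_of_pos hh α
  set a : ℝ := ℓ * h ^ α / Real.Gamma (α + 1) with ha
  have ha0 : 0 < a := by positivity
  set R : ℝ := h ^ (2 * α) / Real.Gamma (2 * α + 1) * M with hR
  have hR0 : 0 ≤ R := by positivity
  have key : ∀ k : ℕ, |Y k - y k| ≤ R * (((1 + a) ^ k - 1) / a) := by
    intro k
    induction k with
    | zero => simp [hY0]
    | succ k ih =>
      have hstep : Y (k + 1) - y (k + 1)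
          = (Y k - y k) + h ^ α / Real.Gamma (α + 1) *
            (f ((k : ℝ) * h, Y k) - f ((k : ℝ) * h, y k)) + r k := by
        rw [hYrec k, hy k]; ring
      have h1 : |Y (k + 1) - y (k + 1)|
          ≤ |Y k - y k| + h ^ α / Real.Gamma (α + 1) * (ℓ * |Y k - y k|) + R := by
        rw [hstep]
        have := abs_add_le ((Y k - y k) + h ^ α / Real.Gamma (α + 1) *
            (f ((k : ℝ) * h, Y k) - f ((k : ℝ) * h, y k))) (r k)
        have h2 := abs_add_le (Y k - y k) (h ^ α / Real.Gamma (α + 1) *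
            (f ((k : ℝ) * h, Y k) - f ((k : ℝ) * h, y k)))
        have h3 : |h ^ α / Real.Gamma (α + 1) *
            (f ((k : ℝ) * h, Y k) - f ((k : ℝ) * h, y k))|
            ≤ h ^ α / Real.Gamma (α + 1) * (ℓ * |Y k - y k|) := by
          rw [abs_mul, abs_of_pos (by positivity : (0:ℝ) < h ^ α / Real.Gamma (α + 1))]
          exact mul_le_mul_of_nonneg_left (hLip _ _ _) (by positivity)
        have h4 := hr k
        linarith
      have hcoef : (1 + a) * |Y k - y k| ≤ (1 + a) * (R * (((1 + a) ^ k - 1) / a)) :=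
        mul_le_mul_of_nonneg_left ih (by linarith)
      have heq : (1 + a) * (R * (((1 + a) ^ k - 1) / a)) + R
          = R * (((1 + a) ^ (k + 1) - 1) / a) := by
        rw [pow_succ]; field_simp; ring
      have ha' : h ^ α / Real.Gamma (α + 1) * (ℓ * |Y k - y k|) = a * |Y k - y k| := by
        rw [ha]; ring
      rw [← heq]
      rw [ha'] at h1
      linarith
  constructor
  · intro k hk
    have hb : (1 + a) ^ (k + 1) ≤ Real.exp (ℓ * T / Real.Gamma (α + 1)) := by
      have h1 : (1 + a) ^ (k + 1) ≤ Real.exp a ^ (k + 1) :=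
        pow_le_pow_left₀ (by linarith) (by linarith [Real.add_one_le_exp a]) _
      have h2 : Real.exp a ^ (k + 1) = Real.exp (((k : ℝ) + 1) * a) := by
        rw [← Real.exp_nat_mul]
        norm_num
      rw [h2] at h1
      refine h1.trans (Real.exp_le_exp.2 ?_)
      rw [ha, mul_div_assoc']
      gcongr ?_ / _
      nlinarith [hk, hℓ]
    have h5 : R * (((1 + a) ^ (k + 1) - 1) / a)
        ≤ R * ((Real.exp (ℓ * T / Real.Gamma (α + 1)) - 1) / a) := by
      gcongr
    have heq2 : R * ((Real.exp (ℓ * T / Real.Gamma (α + 1)) - 1) / a)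
        = h ^ α * Real.Gamma (α + 1) / (ℓ * Real.Gamma (2 * α + 1)) *
          (Real.exp (ℓ * T / Real.Gamma (α + 1)) - 1) * M := by
      have h2α : h ^ (2 * α) = h ^ α * h ^ α := by
        rw [two_mul, Real.rpow_add hh]
      rw [hR, ha, h2α]
      field_simp
    rw [← heq2]
    exact (key (k + 1)).trans h5
  · have h0 : Tendsto (fun x : ℝ => x ^ α) (𝓝[>] (0:ℝ)) (𝓝 0) := by
      have := (Real.continuousAt_rpow_const 0 α (Or.inr hα0.le)).tendsto
      rw [Real.zero_rpow hα0.ne'] at this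
      exact this.mono_left nhdsWithin_le_nhds
    have heq3 : (fun h' : ℝ =>
        h' ^ α * Real.Gamma (α + 1) / (ℓ * Real.Gamma (2 * α + 1)) *
          (Real.exp (ℓ * T / Real.Gamma (α + 1)) - 1) * M)
        = fun h' : ℝ => h' ^ α * (Real.Gamma (α + 1) / (ℓ * Real.Gamma (2 * α + 1)) *
          (Real.exp (ℓ * T / Real.Gamma (α + 1)) - 1) * M) := by
      funext h'; ring
    rw [heq3]
    simpa using h0.mul_const _
end

section
/- Let T > 0, 0 < α ≤ 1, h > 0, ℓ > 0, and let f : ℝ × ℝ → ℝ satisfy |f(t,x) − f(t,y)| ≤ ℓ·|x−y| for all t, x, y. Let t_k = k·h, and let (y_k) and (z_k) be real sequences with y_{k+1} = y_k + (h^α/Γ(α+1))·f(t_k, y_k) and z_{k+1} = z_k + (h^α/Γ(α+1))·f(t_k, z_k), where z₀ = y₀ + δ₀ for some real perturbation δ₀. Then for every k with (k+1)·h^α ≤ T, |z_{k+1} − y_{k+1}| ≤ exp(ℓ·T/Γ(α+1))·|δ₀|. In particular, if |δ₀| ≤ δ then |z_{k+1} − y_{k+1}| ≤ K·δ with K = exp(ℓ·T/Γ(α+1)),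 i.e. the generalized Euler method is stable. -/
/-- Stability of the generalized Euler method (Section 6.3, step I, crisp form):
if `z` is the Euler sequence started from the perturbed initial value
`y₀ + δ₀`, then `|z_{k+1} − y_{k+1}| ≤ exp(ℓ·T/Γ(α+1))·|δ₀|` for grid points
with `(k+1)·h^α ≤ T`; in particular `|z_{k+1} − y_{k+1}| ≤ K·δ` whenever
`|δ₀| ≤ δ`, with `K = exp(ℓ·T/Γ(α+1))`. -/
theorem generalized_euler_stable
    (T α h ℓ δ₀ : ℝ) (hT : 0 < T) (hα0 : 0 < α) (hα1 : α ≤ 1)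
    (hh : 0 < h) (hℓ : 0 < ℓ)
    (f : ℝ × ℝ → ℝ)
    (hLip : ∀ t x y : ℝ, |f (t, x) - f (t, y)| ≤ ℓ * |x - y|)
    (y z : ℕ → ℝ)
    (hz0 : z 0 = y 0 + δ₀)
    (hy : ∀ k : ℕ, y (k + 1) = y k + h ^ α / Real.Gamma (α + 1) * f ((k : ℝ) * h, y k))
    (hz : ∀ k : ℕ, z (k + 1) = z k + h ^ α / Real.Gamma (α + 1) * f ((k : ℝ) * h, z k)) :
    ∀ k : ℕ, ((k : ℝ) + 1) * h ^ α ≤ T →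
      |z (k + 1) - y (k + 1)| ≤ Real.exp (ℓ * T / Real.Gamma (α + 1)) * |δ₀| ∧
      ∀ δ : ℝ, |δ₀| ≤ δ →
        |z (k + 1) - y (k + 1)| ≤ Real.exp (ℓ * T / Real.Gamma (α + 1)) * δ := by
  have hG : 0 < Real.Gamma (α + 1) := Real.Gamma_pos_of_pos (by linarith)
  set G := Real.Gamma (α + 1) with hGdef
  have hha : 0 < h ^ α := Real.rpow_pos_of_pos hh α
  set c : ℝ := ℓ * h ^ α / G with hcdef
  have hc : 0 ≤ c := by positivity
  have key : ∀ k : ℕ, |z k - y k| ≤ (1 + c) ^ k * |δ₀| := by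
    intro k
    induction k with
    | zero => simp [hz0]
    | succ n ih =>
      have hrec : z (n + 1) - y (n + 1) =
          (z n - y n) + h ^ α / G * (f ((n : ℝ) * h, z n) - f ((n : ℝ) * h, y n)) := by
        rw [hy n, hz n]; ring
      have h1 : |z (n + 1) - y (n + 1)| ≤
          |z n - y n| + h ^ α / G * (ℓ * |z n - y n|) := by
        rw [hrec]
        refine (abs_add_le _ _).trans ?_
        gcongr
        · rw [abs_mul, abs_of_pos (by positivity : (0:ℝ) < h ^ α / G)]
          gcongr
          exact hLip _ _ _
      have h2 : |z n - y n| + h ^ α / G * (ℓ * |z n - y n|) = (1 + c) * |z n - y n| := by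
        rw [hcdef]; ring
      calc |z (n + 1) - y (n + 1)| ≤ (1 + c) * |z n - y n| := by rw [← h2]; exact h1
        _ ≤ (1 + c) * ((1 + c) ^ n * |δ₀|) := by
            have : 0 ≤ 1 + c := by linarith
            gcongr
        _ = (1 + c) ^ (n + 1) * |δ₀| := by ring
  intro k hk
  have hpow : (1 + c) ^ (k + 1) ≤ Real.exp (ℓ * T / G) := by
    have h1 : (1 + c) ^ (k + 1) ≤ Real.exp c ^ (k + 1) :=
      pow_le_pow_left₀ (by linarith) (by linarith [Real.add_one_le_exp c]) _
    have h2 : Real.exp c ^ (k + 1) = Real.exp (((k : ℝ) + 1) * c) := by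
      rw [← Real.exp_nat_mul]; push_cast; ring_nf
    have h3 : ((k : ℝ) + 1) * c ≤ ℓ * T / G := by
      rw [hcdef]
      have heq : ((k : ℝ) + 1) * (ℓ * h ^ α / G) = ℓ * (((k : ℝ) + 1) * h ^ α) / G := by ring
      rw [heq]
      gcongr
    calc (1 + c) ^ (k + 1) ≤ Real.exp c ^ (k + 1) := h1
      _ = Real.exp (((k : ℝ) + 1) * c) := h2
      _ ≤ Real.exp (ℓ * T / G) := Real.exp_le_exp.mpr h3
  have main : |z (k + 1) - y (k + 1)| ≤ Real.exp (ℓ * T / G) * |δ₀| := by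
    calc |z (k + 1) - y (k + 1)| ≤ (1 + c) ^ (k + 1) * |δ₀| := key (k + 1)
      _ ≤ Real.exp (ℓ * T / G) * |δ₀| := by gcongr
  exact ⟨main, fun δ hδ => main.trans (by gcongr)⟩
end
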